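/- Let m ≥ 2 and p ∈ (0,1), q = 1 − p. Consider m i.i.d. infinite binary strings with i.i.d. Bernoulli(p) bits, and let t' be a fixed binary tree with m leaves in which no leaf has a parent of outdegree 1. Then the probability that the trie built from the m strings equals t' is m! · q^{LPL(t')} · p^{RPL(t')}, where LPL(t') and RPL(t') are the sums over leaves of t' of their left and right depths respectively. -/

import Mathlib

/-- Binary trees: `leaf` denotes the empty tree, so a node may have 0, 1 or 2 children. -/
inductive BTree where
  | leaf : BTree
  | node : BTree → BTree → BTree
deriving DecidableEq

/-- Number of leaves (nodes of outdegree 0). -/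
def BTree.leaves : BTree → ℕ
  | .leaf => 0
  | .node .leaf .leaf => 1
  | .node l r => l.leaves + r.leaves

/-- Left external path length: the sum over the leaves of the number of
left steps on the path from the root. -/
def BTree.LPL : BTree → ℕ
  | .leaf => 0
  | .node l r => l.LPL + l.leaves + r.LPL

/-- Right external path length: the sum over the leaves of the number of
right steps on the path from the root. -/
def BTree.RPL : BTree → ℕ
  | .leaf => 0
  | .node l r => l.RPL + r.RPL + r.leaves

/-- No leaf has a parent of outdegree 1. -/
def BTree.NoLonelyLeaf : BTree → Prop
  | .leaf => True
  | .node .leaf .leaf => True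
  | .node l .leaf => l ≠ .node .leaf .leaf ∧ l.NoLonelyLeaf
  | .node .leaf r => r ≠ .node .leaf .leaf ∧ r.NoLonelyLeaf
  | .node l r => l.NoLonelyLeaf ∧ r.NoLonelyLeaf

/-- `IsTrie strs T`: `T` is the trie built from the list of infinite binary strings
`strs` (0 = left, 1 = right): a set of `≥ 2` strings is split by its first bit and
the subtries are built recursively from the tails; a single string gives a leaf. -/
inductive IsTrie : List (ℕ → Bool) → BTree → Prop where
  | nil : IsTrie [] .leaf
  | single (s : ℕ → Bool) : IsTrie [s] (.node .leaf .leaf)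
  | branch (strs : List (ℕ → Bool)) (l r : BTree) (h : 2 ≤ strs.length)
      (hl : IsTrie ((strs.filter fun s => s 0 = false).map fun s n => s (n + 1)) l)
      (hr : IsTrie ((strs.filter fun s => s 0 = true).map fun s n => s (n + 1)) r) :
      IsTrie strs (.node l r)

/-!
The trie built from the strings equals `t'` exactly when the words labelling the root paths of
the leaves of `t'`, in some order, are initial segments of the strings: by induction on `t'`,
splitting the strings by their first bit. These leaf words form a prefix-free code, so the
event is a disjoint union, over the `m!` orderings of the code, of cylinder sets, and each
cylinder has probability `∏ q ^ #zeros · p ^ #ones = q ^ LPL(t') · p ^ RPL(t')`.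
-/
section Prefix

variable {α : Type*}

def IsPrefixOfStream (w : List α) (s : ℕ → α) : Prop :=
  (List.range w.length).map s = w

theorem isPrefixOfStream_nil (s : ℕ → α) : IsPrefixOfStream [] s := rfl

theorem isPrefixOfStream_cons {a : α} {w : List α} {s : ℕ → α} :
    IsPrefixOfStream (a :: w) s ↔ s 0 = a ∧ IsPrefixOfStream w fun n => s (n + 1) := by
  rw [IsPrefixOfStream, List.length_cons, List.range_succ_eq_map, List.map_cons, List.map_map,
    List.cons_eq_cons]
  rfl

theorem isPrefixOfStream_iff_getElem {w : List α} {s : ℕ → α} :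
    IsPrefixOfStream w s ↔ ∀ n (hn : n < w.length), s n = w[n] := by
  simp [IsPrefixOfStream, List.ext_getElem_iff]

theorem IsPrefixOfStream.prefix_of_length_le {u v : List α} {s : ℕ → α}
    (hu : IsPrefixOfStream u s) (hv : IsPrefixOfStream v s) (h : u.length ≤ v.length) :
    u <+: v := by
  rw [List.prefix_iff_eq_take, ← hv, ← List.map_take, List.take_range, min_eq_left h]
  exact hu.symm

def IsPrefixFree (W : List (List α)) : Prop :=
  W.Pairwise fun u v => ¬u <+: v ∧ ¬v <+: u

theorem IsPrefixFree.nodup {W : List (List α)} (hW : IsPrefixFree W) : W.Nodup :=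
  hW.imp fun h => by rintro rfl; exact h.1 List.prefix_rfl

theorem IsPrefixFree.eq_of_isPrefixOfStream {W : List (List α)} (hW : IsPrefixFree W)
    {u v : List α} (hu : u ∈ W) (hv : v ∈ W) {s : ℕ → α}
    (hus : IsPrefixOfStream u s) (hvs : IsPrefixOfStream v s) : u = v := by
  by_contra hne
  have : Std.Symm fun u v : List α => ¬u <+: v ∧ ¬v <+: u := ⟨fun _ _ h => h.symm⟩
  have hincomp := hW.forall hu hv hne
  rcases le_total u.length v.length with h | h
  · exact hincomp.1 (hus.prefix_of_length_le hvs h)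
  · exact hincomp.2 (hvs.prefix_of_length_le hus h)

theorem IsPrefixFree.eq_of_forall₂ {W : List (List α)} (hW : IsPrefixFree W)
    {ws ws' : List (List α)} {strs : List (ℕ → α)} (hws : ws ⊆ W) (hws' : ws' ⊆ W)
    (h : List.Forall₂ IsPrefixOfStream ws strs) (h' : List.Forall₂ IsPrefixOfStream ws' strs) :
    ws = ws' := by
  induction h generalizing ws' with
  | nil => exact (List.forall₂_nil_right_iff.1 h').symm
  | cons hu _ ih =>
    obtain _ | ⟨hv, h'⟩ := h'
    rw [List.cons_subset] at hws hws'
    rw [hW.eq_of_isPrefixOfStream hws.1 hws'.1 hu hv, ih hws.2 hws'.2 h']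

def ArePrefixesUpToPerm (W : List (List α)) (strs : List (ℕ → α)) : Prop :=
  ∃ strs', List.Forall₂ IsPrefixOfStream W strs' ∧ strs'.Perm strs

theorem arePrefixesUpToPerm_iff_exists_perm {W : List (List α)} {strs : List (ℕ → α)} :
    ArePrefixesUpToPerm W strs ↔ ∃ ws, W.Perm ws ∧ List.Forall₂ IsPrefixOfStream ws strs := by
  change Relation.Comp _ _ W strs ↔ Relation.Comp _ _ W strs
  rw [List.forall₂_comp_perm_eq_perm_comp_forall₂]

theorem ArePrefixesUpToPerm.length_eq {W : List (List α)} {strs : List (ℕ → α)}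
    (h : ArePrefixesUpToPerm W strs) : strs.length = W.length := by
  obtain ⟨strs', hW, hperm⟩ := h
  rw [← hperm.length_eq, hW.length_eq]

theorem arePrefixesUpToPerm_nil_iff {strs : List (ℕ → α)} :
    ArePrefixesUpToPerm [] strs ↔ strs = [] := by
  simp [ArePrefixesUpToPerm, List.forall₂_nil_left_iff]

theorem arePrefixesUpToPerm_singleton_nil_iff {strs : List (ℕ → α)} :
    ArePrefixesUpToPerm [[]] strs ↔ ∃ s, strs = [s] := by
  simp [ArePrefixesUpToPerm, List.forall₂_cons_left_iff, List.forall₂_nil_left_iff,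
    isPrefixOfStream_nil, eq_comm]

theorem forall₂_isPrefixOfStream_map_cons_iff {a : α} {L : List (List α)} {strs : List (ℕ → α)} :
    List.Forall₂ IsPrefixOfStream (L.map (a :: ·)) strs ↔
      (∀ s ∈ strs, s 0 = a) ∧
        List.Forall₂ IsPrefixOfStream L (strs.map fun s n => s (n + 1)) := by
  induction strs generalizing L with
  | nil => cases L <;> simp
  | cons s strs ih => cases L <;> simp [isPrefixOfStream_cons, ih]; tauto

end Prefix

theorem arePrefixesUpToPerm_append_iff (L R : List (List Bool)) (strs : List (ℕ → Bool)) :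
    ArePrefixesUpToPerm (L.map (false :: ·) ++ R.map (true :: ·)) strs ↔
      ArePrefixesUpToPerm L ((strs.filter fun s => s 0 = false).map fun s n => s (n + 1)) ∧
      ArePrefixesUpToPerm R ((strs.filter fun s => s 0 = true).map fun s n => s (n + 1)) := by
  constructor
  · rintro ⟨strs', h, hperm⟩
    obtain ⟨A, B, rfl, hA, hB⟩ : ∃ A B, strs' = A ++ B ∧
        List.Forall₂ IsPrefixOfStream (L.map (false :: ·)) A ∧
        List.Forall₂ IsPrefixOfStream (R.map (true :: ·)) B :=
      ⟨_, _, (List.take_append_drop (L.map (false :: ·)).length strs').symm,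
        by simpa only [List.take_left] using List.forall₂_take (L.map (false :: ·)).length h,
        by simpa only [List.drop_left] using List.forall₂_drop (L.map (false :: ·)).length h⟩
    rw [forall₂_isPrefixOfStream_map_cons_iff] at hA hB
    have hfalse : ((A ++ B).filter fun s => s 0 = false) = A := by
      rw [List.filter_append, List.filter_eq_self.2 (by simpa using hA.1),
        List.filter_eq_nil_iff.2 (by simpa using hB.1), List.append_nil]
    have htrue : ((A ++ B).filter fun s => s 0 = true) = B := by
      rw [List.filter_append, List.filter_eq_nil_iff.2 (by simpa using hA.1),
        List.filter_eq_self.2 (by simpa using hB.1), List.nil_append]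
    refine ⟨⟨_, hA.2, ?_⟩, ⟨_, hB.2, ?_⟩⟩
    · rw [← hfalse]; exact (hperm.filter _).map _
    · rw [← htrue]; exact (hperm.filter _).map _
  · rintro ⟨⟨X, hX, hXperm⟩, ⟨Y, hY, hYperm⟩⟩
    obtain ⟨A, rfl, hA⟩ := (congrFun₂ (List.eq_map_comp_perm _) _ _).mpr hXperm
    obtain ⟨B, rfl, hB⟩ := (congrFun₂ (List.eq_map_comp_perm _) _ _).mpr hYperm
    have hA' := forall₂_isPrefixOfStream_map_cons_iff.2
      ⟨fun s hs => by simpa using (List.mem_filter.1 (hA.subset hs)).2, hX⟩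
    have hB' := forall₂_isPrefixOfStream_map_cons_iff.2
      ⟨fun s hs => by simpa using (List.mem_filter.1 (hB.subset hs)).2, hY⟩
    refine ⟨A ++ B, List.rel_append hA' hB', (hA.append hB).trans ?_⟩
    convert List.filter_append_perm (fun s : ℕ → Bool => s 0 = false) strs using 3
    simp

namespace BTree

def leafWords : BTree → List (List Bool)
  | .leaf => []
  | .node .leaf .leaf => [[]]
  | .node l r => l.leafWords.map (false :: ·) ++ r.leafWords.map (true :: ·)

theorem leafWords_node {l r : BTree} (h : ¬(l = .leaf ∧ r = .leaf)) :
    (node l r).leafWords = l.leafWords.map (false :: ·) ++ r.leafWords.map (true :: ·) := by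
  cases l <;> cases r <;> simp_all [leafWords]

theorem length_leafWords (t : BTree) : t.leafWords.length = t.leaves := by
  induction t with
  | leaf => rfl
  | node l r ihl ihr => cases l <;> cases r <;> simp_all [leafWords, leaves]

theorem sum_count_false_leafWords (t : BTree) :
    (t.leafWords.map (List.count false)).sum = t.LPL := by
  induction t with
  | leaf => rfl
  | node l r ihl ihr =>
    by_cases hb : l = .leaf ∧ r = .leaf
    · obtain ⟨rfl, rfl⟩ := hb; rfl
    · simp [leafWords_node hb, LPL, Function.comp_def, List.sum_map_add, ihl, ihr,
        length_leafWords]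

theorem sum_count_true_leafWords (t : BTree) :
    (t.leafWords.map (List.count true)).sum = t.RPL := by
  induction t with
  | leaf => rfl
  | node l r ihl ihr =>
    by_cases hb : l = .leaf ∧ r = .leaf
    · obtain ⟨rfl, rfl⟩ := hb; rfl
    · simp [leafWords_node hb, RPL, Function.comp_def, add_assoc, List.sum_map_add, ihl, ihr,
        length_leafWords]

theorem isPrefixFree_leafWords (t : BTree) : IsPrefixFree t.leafWords := by
  induction t with
  | leaf => exact List.Pairwise.nil
  | node l r ihl ihr =>
    by_cases hb : l = .leaf ∧ r = .leaf
    · obtain ⟨rfl, rfl⟩ := hb; exact List.pairwise_singleton _ _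
    · rw [IsPrefixFree, leafWords_node hb, List.pairwise_append, List.pairwise_map,
        List.pairwise_map]
      refine ⟨ihl.imp ?_, ihr.imp ?_, ?_⟩ <;> simp

theorem leaves_node {l r : BTree} (h : ¬(l = .leaf ∧ r = .leaf)) :
    (node l r).leaves = l.leaves + r.leaves := by
  cases l <;> cases r <;> simp_all [leaves]

theorem one_le_leaves {t : BTree} (ht : t ≠ .leaf) : 1 ≤ t.leaves := by
  induction t with
  | leaf => exact absurd rfl ht
  | node l r ihl ihr =>
    by_cases hb : l = .leaf ∧ r = .leaf
    · obtain ⟨rfl, rfl⟩ := hb; rfl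
    · rw [leaves_node hb]
      by_cases hl : l = .leaf
      · have := ihr fun hr => hb ⟨hl, hr⟩; omega
      · have := ihl hl; omega

theorem two_le_leaves_node : ∀ {l r : BTree}, (node l r).NoLonelyLeaf →
    ¬(l = .leaf ∧ r = .leaf) → 2 ≤ (node l r).leaves
  | .leaf, .leaf, _, h => absurd ⟨rfl, rfl⟩ h
  | .leaf, .node a b, ⟨hne, ht⟩, _ => by
    have := two_le_leaves_node ht fun ⟨ha, hb⟩ => hne (by rw [ha, hb])
    simpa [leaves] using this
  | .node a b, .leaf, ⟨hne, ht⟩, _ => by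
    have := two_le_leaves_node ht fun ⟨ha, hb⟩ => hne (by rw [ha, hb])
    simpa [leaves] using this
  | .node a b, .node c d, _, _ => by
    have := one_le_leaves (t := node a b) nofun
    have := one_le_leaves (t := node c d) nofun
    simp only [leaves] at *
    omega
termination_by l r => sizeOf l + sizeOf r

theorem NoLonelyLeaf.of_node {l r : BTree} (h : (node l r).NoLonelyLeaf) :
    l.NoLonelyLeaf ∧ r.NoLonelyLeaf := by
  cases l <;> cases r <;> simp_all [NoLonelyLeaf]

end BTree

theorem isTrie_leaf_iff {strs : List (ℕ → Bool)} : IsTrie strs .leaf ↔ strs = [] :=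
  ⟨fun h => by cases h; rfl, fun h => h ▸ .nil⟩

theorem isTrie_node_leaf_leaf_iff {strs : List (ℕ → Bool)} :
    IsTrie strs (.node .leaf .leaf) ↔ ∃ s, strs = [s] := by
  constructor
  · rintro (_ | ⟨s⟩ | ⟨_, _, _, hlen, hl, hr⟩)
    · exact ⟨s, rfl⟩
    · obtain ⟨s, hs⟩ := List.exists_mem_of_length_pos (by omega : 0 < strs.length)
      have hl := List.map_eq_nil_iff.1 (isTrie_leaf_iff.1 hl)
      have hr := List.map_eq_nil_iff.1 (isTrie_leaf_iff.1 hr)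
      rw [List.filter_eq_nil_iff] at hl hr
      cases h : s 0
      · exact absurd (by simpa using h) (hl s hs)
      · exact absurd (by simpa using h) (hr s hs)
  · rintro ⟨s, rfl⟩
    exact .single s

theorem isTrie_node_iff {l r : BTree} (h : ¬(l = .leaf ∧ r = .leaf)) {strs : List (ℕ → Bool)} :
    IsTrie strs (.node l r) ↔ 2 ≤ strs.length ∧
      IsTrie ((strs.filter fun s => s 0 = false).map fun s n => s (n + 1)) l ∧
      IsTrie ((strs.filter fun s => s 0 = true).map fun s n => s (n + 1)) r := by
  constructor
  · rintro (_ | _ | ⟨_, _, _, hlen, hl, hr⟩)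
    · exact absurd ⟨rfl, rfl⟩ h
    · exact ⟨hlen, hl, hr⟩
  · rintro ⟨hlen, hl, hr⟩
    exact .branch strs l r hlen hl hr

theorem isTrie_iff_arePrefixesUpToPerm {t : BTree} (ht : t.NoLonelyLeaf)
    {strs : List (ℕ → Bool)} : IsTrie strs t ↔ ArePrefixesUpToPerm t.leafWords strs := by
  induction t generalizing strs with
  | leaf => rw [isTrie_leaf_iff, BTree.leafWords, arePrefixesUpToPerm_nil_iff]
  | node l r ihl ihr =>
    by_cases hb : l = .leaf ∧ r = .leaf
    · obtain ⟨rfl, rfl⟩ := hb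
      rw [isTrie_node_leaf_leaf_iff, BTree.leafWords, arePrefixesUpToPerm_singleton_nil_iff]
    · obtain ⟨hl, hr⟩ := ht.of_node
      rw [isTrie_node_iff hb, ihl hl, ihr hr, BTree.leafWords_node hb,
        ← arePrefixesUpToPerm_append_iff, ← BTree.leafWords_node hb]
      refine ⟨And.right, fun h => ⟨?_, h⟩⟩
      rw [h.length_eq, BTree.length_leafWords]
      exact BTree.two_le_leaves_node ht hb

theorem List.forall₂_ofFn_iff {α β : Type*} {R : α → β → Prop} {l : List α}
    {f : Fin l.length → β} :
    List.Forall₂ R l (List.ofFn f) ↔ ∀ i : Fin l.length, R l[(i : ℕ)] (f i) := by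
  rw [List.forall₂_iff_get]
  simp [Fin.forall_iff]

theorem prod_range_ite_getD {M : Type*} [CommMonoid M] (x y : M) (w : List Bool) :
    ∏ n ∈ Finset.range w.length, (if w.getD n false then x else y) =
      x ^ w.count true * y ^ w.count false := by
  induction w with
  | nil => simp
  | cons b w ih =>
    rw [List.length_cons, Finset.prod_range_succ']
    simp only [List.getD_cons_succ, List.getD_cons_zero, ih]
    cases b <;> simp [pow_succ] <;> ac_rfl

theorem setOf_forall₂_isPrefixOfStream_ofFn (ws : List (List Bool)) :
    {ω : Fin ws.length → ℕ → Bool | List.Forall₂ IsPrefixOfStream ws (List.ofFn ω)} =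
      {ω | ∀ x ∈ Finset.univ.biUnion fun i : Fin ws.length =>
          (Finset.range ws[(i : ℕ)].length).image (Prod.mk i),
        ω x.1 x.2 = ws[(x.1 : ℕ)].getD x.2 false} := by
  ext ω
  simp only [Set.mem_ofPred_eq, List.forall₂_ofFn_iff, isPrefixOfStream_iff_getElem]
  constructor
  · intro h x hx
    obtain ⟨i, n, hn, rfl⟩ :
        ∃ (i : Fin ws.length) (n : ℕ), n < ws[(i : ℕ)].length ∧ (i, n) = x := by
      simpa using hx
    rw [List.getD_eq_getElem _ _ hn]
    exact h i n hn
  · intro h i n hn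
    rw [← List.getD_eq_getElem _ false hn]
    exact h (i, n) (by simpa using hn)

section Measure

open MeasureTheory

def IsBernoulliProduct {m : ℕ} (p : ℝ) (μ : Measure (Fin m → ℕ → Bool)) : Prop :=
  ∀ (S : Finset (Fin m × ℕ)) (f : Fin m × ℕ → Bool),
    μ {ω | ∀ x ∈ S, ω x.1 x.2 = f x} = ENNReal.ofReal (∏ x ∈ S, if f x then p else 1 - p)

variable {m : ℕ} {p : ℝ} {μ : Measure (Fin m → ℕ → Bool)}

theorem measurableSet_forall₂_isPrefixOfStream_ofFn (ws : List (List Bool))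
    (hlen : ws.length = m) :
    MeasurableSet {ω : Fin m → ℕ → Bool | List.Forall₂ IsPrefixOfStream ws (List.ofFn ω)} := by
  subst hlen
  rw [setOf_forall₂_isPrefixOfStream_ofFn]
  measurability

theorem measure_forall₂_isPrefixOfStream_ofFn (hμ : IsBernoulliProduct p μ)
    (ws : List (List Bool)) (hlen : ws.length = m) :
    μ {ω | List.Forall₂ IsPrefixOfStream ws (List.ofFn ω)} =
      ENNReal.ofReal (p ^ (ws.map (List.count true)).sum *
        (1 - p) ^ (ws.map (List.count false)).sum) := by
  subst hlen
  rw [setOf_forall₂_isPrefixOfStream_ofFn, hμ, Finset.prod_finset_product _ Finset.univ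
    (fun i : Fin ws.length => Finset.range ws[(i : ℕ)].length) (by simp)]
  simp only [prod_range_ite_getD, Finset.prod_mul_distrib, Finset.prod_pow_eq_pow_sum]
  rw [Fin.sum_univ_fun_getElem ws (List.count true), Fin.sum_univ_fun_getElem ws (List.count false)]

theorem measure_arePrefixesUpToPerm (hμ : IsBernoulliProduct p μ) {W : List (List Bool)}
    (hW : IsPrefixFree W) (hlen : W.length = m) :
    μ {ω | ArePrefixesUpToPerm W (List.ofFn ω)} = m.factorial *
      ENNReal.ofReal (p ^ (W.map (List.count true)).sum *
        (1 - p) ^ (W.map (List.count false)).sum) := by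
  classical
  have hperm : ∀ ws ∈ W.permutations.toFinset, ws.Perm W := fun ws hws => by simpa using hws
  have hunion : {ω : Fin m → ℕ → Bool | ArePrefixesUpToPerm W (List.ofFn ω)} =
      ⋃ ws ∈ W.permutations.toFinset, {ω | List.Forall₂ IsPrefixOfStream ws (List.ofFn ω)} := by
    ext ω
    simp [arePrefixesUpToPerm_iff_exists_perm, List.perm_comm]
  have hdisj : (W.permutations.toFinset : Set (List (List Bool))).PairwiseDisjoint
      fun ws => {ω : Fin m → ℕ → Bool | List.Forall₂ IsPrefixOfStream ws (List.ofFn ω)} :=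
    fun ws hws ws' hws' hne => Set.disjoint_left.2 fun ω h h' => hne <|
      hW.eq_of_forall₂ (hperm ws hws).subset (hperm ws' hws').subset h h'
  rw [hunion, measure_biUnion_finset hdisj fun ws hws =>
      measurableSet_forall₂_isPrefixOfStream_ofFn ws ((hperm ws hws).length_eq.trans hlen)]
  rw [Finset.sum_congr rfl fun ws hws => by
      rw [measure_forall₂_isPrefixOfStream_ofFn hμ ws ((hperm ws hws).length_eq.trans hlen),
        ((hperm ws hws).map _).sum_eq, ((hperm ws hws).map _).sum_eq]]
  rw [Finset.sum_const, List.toFinset_card_of_nodup (List.nodup_permutations _ hW.nodup),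
    List.length_permutations, hlen, nsmul_eq_mul]

end Measure

theorem stmt_17_general (m : ℕ) (p : ℝ) (hp : 0 < p) (hp1 : p < 1)
    (μ : MeasureTheory.Measure (Fin m → ℕ → Bool))
    (hμ : ∀ (S : Finset (Fin m × ℕ)) (f : Fin m × ℕ → Bool),
      μ {ω | ∀ x ∈ S, ω x.1 x.2 = f x}
        = ENNReal.ofReal (∏ x ∈ S, if f x then p else 1 - p))
    (t' : BTree) (hleaves : t'.leaves = m) (hgood : t'.NoLonelyLeaf) :
    (μ {ω | IsTrie (List.ofFn ω) t'}).toReal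
      = (Nat.factorial m : ℝ) * (1 - p) ^ t'.LPL * p ^ t'.RPL := by
  simp_rw [isTrie_iff_arePrefixesUpToPerm hgood]
  rw [measure_arePrefixesUpToPerm hμ t'.isPrefixFree_leafWords
      (t'.length_leafWords.trans hleaves), t'.sum_count_true_leafWords,
    t'.sum_count_false_leafWords, ENNReal.toReal_mul, ENNReal.toReal_natCast,
    ENNReal.toReal_ofReal (by have := sub_pos.2 hp1; positivity)]
  ring

/-- Let `m ≥ 2`, `p ∈ (0,1)` and consider `m` i.i.d. infinite binary strings with i.i.d.
Bernoulli(p) bits (a probability measure `μ` on `Fin m → ℕ → Bool` whose finite-dimensional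
cylinder probabilities are the Bernoulli products). If `t'` is a fixed binary tree with `m`
leaves in which no leaf has a parent of outdegree 1, then the probability that the trie
built from the `m` strings equals `t'` is `m! · q^{LPL(t')} · p^{RPL(t')}`, `q = 1 - p`. -/
theorem stmt_17 (m : ℕ) (hm : 2 ≤ m) (p : ℝ) (hp : 0 < p) (hp1 : p < 1)
    (μ : MeasureTheory.Measure (Fin m → ℕ → Bool)) [MeasureTheory.IsProbabilityMeasure μ]
    (hμ : ∀ (S : Finset (Fin m × ℕ)) (f : Fin m × ℕ → Bool),
      μ {ω | ∀ x ∈ S, ω x.1 x.2 = f x}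
        = ENNReal.ofReal (∏ x ∈ S, if f x then p else 1 - p))
    (t' : BTree) (hleaves : t'.leaves = m) (hgood : t'.NoLonelyLeaf) :
    (μ {ω | IsTrie (List.ofFn ω) t'}).toReal
      = (Nat.factorial m : ℝ) * (1 - p) ^ t'.LPL * p ^ t'.RPL :=
  stmt_17_general m p hp hp1 μ hμ t' hleaves hgood
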